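/- Any deterministic one-way communication protocol in which Alice holds the prefix M[0..t−1] of the mask, Bob holds the suffix and the rank r, and Bob outputs j(M, r), must communicate at least ⌈log₂ min(t, N−t)⌉ bits. Formally: if a function c from Alice's inputs to transcripts, together with a function from (transcript, Bob's input) to outputs, computes rank-select correctly, and Bob's input is fixed to the all-ones suffix with r = t−1, then the transcript set has at least min(t, N−t) elements. -/

import Mathlib

/-- Totalized rank-select: the position of the r-th set bit of M, or the sentinel N. -/
def rankSelect (N : ℕ) (M : Fin N → Bool) (r : ℕ) : ℕ :=
  ((((List.finRange N).filter fun i => M i)).map Fin.val).getD r N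

/-! The masks whose prefix has weight `w ∈ [2t - N, t)` and whose suffix is all ones have their
`(t - 1)`-st set bit at `2t - 1 - w`. So Bob's answers, and therefore Alice's transcripts, tell
these `min t (N - t)` prefixes apart. -/

lemma rankSelect_eq_getD_filter_range (N r : ℕ) (p : ℕ → Bool) :
    rankSelect N (fun i => p i.val) r = ((List.range N).filter p).getD r N := by
  rw [rankSelect, ← List.map_coe_finRange_eq_range, List.filter_map]
  rfl

lemma range'_append_range' {a b c : ℕ} (hab : a ≤ b) (hbc : b ≤ c) :
    List.range' a (b - a) ++ List.range' b (c - b) = List.range' a (c - a) := by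
  have h := List.range'_append_1 (s := a) (m := b - a) (n := c - b)
  rwa [Nat.add_sub_cancel' hab, show b - a + (c - b) = c - a by omega] at h

lemma filter_range_lt_or_le {w t N : ℕ} (hw : w ≤ t) (ht : t ≤ N) :
    (List.range N).filter (fun n => decide (n < w ∨ t ≤ n))
      = List.range' 0 w ++ List.range' t (N - t) := by
  have hsplit : List.range N
      = List.range' 0 w ++ List.range' w (t - w) ++ List.range' t (N - t) := by
    rw [List.append_assoc, range'_append_range' hw ht, List.range_eq_range']
    simpa using (range'_append_range' (Nat.zero_le w) (hw.trans ht)).symm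
  rw [hsplit, List.filter_append, List.filter_append, List.filter_eq_self.2,
    List.filter_eq_nil_iff.2, List.filter_eq_self.2, List.append_nil]
  all_goals
    intro n hn
    simp only [List.mem_range'_1] at hn
    simp only [decide_eq_true_eq]
    omega

lemma rankSelect_lt_or_le {w t N r : ℕ} (hwt : w ≤ t) (hw : w ≤ r) (hr : r + t < w + N) :
    rankSelect N (fun i => decide (i.val < w ∨ t ≤ i.val)) r = r - w + t := by
  rw [rankSelect_eq_getD_filter_range N r (fun n => decide (n < w ∨ t ≤ n)),
    filter_range_lt_or_le hwt (by omega), List.getD_eq_getElem _ _ (by simp; omega),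
    List.getElem_append_right (by simp; omega), List.getElem_range']
  simp only [List.length_range', one_mul]
  omega

theorem stmt_5_general (N t : ℕ)
    (T : Type) [Fintype T]
    (alice : (Fin t → Bool) → T) (bob : T → ℕ)
    (hcorrect : ∀ w : ℕ, 2 * t ≤ w + N → w ≤ t - 1 →
      bob (alice (fun i : Fin t => decide (i.val < w)))
        = rankSelect N (fun i : Fin N => decide (i.val < w ∨ t ≤ i.val)) (t - 1)) :
    min t (N - t) ≤ Fintype.card T := by
  classical
  set S := Finset.Ico (2 * t - N) t
  have hbob : ∀ w ∈ S, bob (alice fun i : Fin t => decide (i.val < w)) = 2 * t - 1 - w := by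
    intro w hw
    rw [Finset.mem_Ico] at hw
    rw [hcorrect w (by omega) (by omega), rankSelect_lt_or_le (by omega) (by omega) (by omega)]
    omega
  have hinj : Set.InjOn (fun w => alice fun i : Fin t => decide (i.val < w)) S := by
    intro w hw w' hw' h
    have hval := (hbob w hw).symm.trans ((congrArg bob h).trans (hbob w' hw'))
    rw [Finset.mem_coe, Finset.mem_Ico] at hw hw'
    omega
  calc min t (N - t) = S.card := by rw [Nat.card_Ico]; omega
    _ = (S.image fun w => alice fun i : Fin t => decide (i.val < w)).card :=
        (Finset.card_image_of_injOn hinj).symm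
    _ ≤ Fintype.card T := Finset.card_le_univ _

/-- Rank-select cut lower bound. Any deterministic one-way protocol in which
Alice computes a transcript from the mask prefix M[0..t−1] and Bob outputs j(M, r) from
the transcript and his input (fixed here to the all-ones suffix with rank r = t−1) must
have at least min(t, N−t) distinct transcripts, i.e. communicate ⌈log₂ min(t,N−t)⌉ bits.
Correctness is required on the canonical family M^(w) (prefix of weight w, all-ones
suffix) for w ∈ S_t, whose rank-(t−1) select value is 2t − w − 1. -/
theorem stmt_5 (N t : ℕ) (hN : 2 ≤ N) (ht1 : 1 ≤ t) (ht2 : t ≤ N - 1)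
    (T : Type) [Fintype T]
    (alice : (Fin t → Bool) → T) (bob : T → ℕ)
    (hcorrect : ∀ w : ℕ, 2 * t ≤ w + N → w ≤ t - 1 →
      bob (alice (fun i : Fin t => decide (i.val < w)))
        = rankSelect N (fun i : Fin N => decide (i.val < w ∨ t ≤ i.val)) (t - 1)) :
    min t (N - t) ≤ Fintype.card T :=
  stmt_5_general N t T alice bob hcorrect
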